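/- Let 𝓗 = (V,H) be a finite loopless undirected hypergraph and let x ≠ y be vertices in the same connected component such that: (a) for every common neighbour z of x and y there is exactly one hyperedge containing {x,z} and exactly one hyperedge containing {y,z}, (b) d_x = d_y > 0, and (c) the equal-edges Ollivier–Ricci curvature κ_EE(x,y) equals 1. Then x and y have exactly the same neighbours, and for every common neighbour z the unique hyperedge containing {x,z} and the unique hyperedge containing {y,z} have the same cardinality (i.e. x and y are strongly structurally equivalent). -/

import Mathlib

/-!
STATEMENT 13: Let 𝓗 = (V,H) be a finite loopless undirected hypergraph and let
x ≠ y be vertices in the same connected component such that: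
(a) for every common neighbour z of x and y there is exactly one hyperedge
    containing {x,z} and exactly one hyperedge containing {y,z},
(b) d_x = d_y > 0, and
(c) the equal-edges Ollivier–Ricci curvature κ_EE(x,y) equals 1.
Then x and y have exactly the same neighbours, and for every common neighbour z
the unique hyperedge containing {x,z} and the unique hyperedge containing {y,z}
have the same cardinality (i.e. x and y are strongly structurally equivalent).
-/
open Finset

variable {V : Type*}

/-- Two distinct vertices are neighbours in the hypergraph `H` if some hyperedge
contains both. -/
def HNbr (H : Finset (Finset V)) (u v : V) : Prop :=
  u ≠ v ∧ ∃ e ∈ H, u ∈ e ∧ v ∈ e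

/-- `IsHPath H u v vs es` says that the list of vertices `vs` together with the
list of hyperedges `es` forms a path from `u` to `v` in the hypergraph `H`:
consecutive vertices lie in the corresponding hyperedge, and all vertices and
all hyperedges are distinct. -/
def IsHPath (H : Finset (Finset V)) (u v : V)
    (vs : List V) (es : List (Finset V)) : Prop :=
  vs.length = es.length + 1 ∧
  vs.head? = some u ∧ vs.getLast? = some v ∧
  vs.Nodup ∧ es.Nodup ∧ (∀ e ∈ es, e ∈ H) ∧
  ∀ i < es.length, vs.getD i u ∈ es.getD i ∅ ∧ vs.getD (i + 1) u ∈ es.getD i ∅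

/-- There is a path of length `n` between `u` and `v` in the hypergraph `H`. -/
def HPathLen (H : Finset (Finset V)) (n : ℕ) (u v : V) : Prop :=
  ∃ vs es, IsHPath H u v vs es ∧ es.length = n

/-- The shortest-path distance in a hypergraph: the minimum length of a path. -/
noncomputable def hdist (H : Finset (Finset V)) (u v : V) : ℕ :=
  sInf {n | HPathLen H n u v}

/-- A coupling of two measures `μ` and `ν` on a finite vertex set. -/
def IsCoupling [Fintype V] (μ ν : V → ℝ) (ξ : V → V → ℝ) : Prop :=
  (∀ u v, 0 ≤ ξ u v) ∧ (∀ u, ∑ v, ξ u v = μ u) ∧ (∀ v, ∑ u, ξ u v = ν v)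

/-- The 1-Wasserstein distance between `μ` and `ν` with respect to the distance
function `d`. -/
noncomputable def W1 [Fintype V] (d : V → V → ℝ) (μ ν : V → ℝ) : ℝ :=
  sInf {c | ∃ ξ : V → V → ℝ, IsCoupling μ ν ξ ∧ c = ∑ u, ∑ v, d u v * ξ u v}

-- The degree of a vertex: the number of hyperedges containing it.
open Classical in
noncomputable def hdeg (H : Finset (Finset V)) (x : V) : ℕ :=
  (H.filter (fun e => x ∈ e)).card

-- The equal-edges (EE) measure of a vertex `x`:
-- `μ_x^EE(z) = (1/d_x) · ∑_{e ∈ H, x ∈ e, z ∈ e, z ≠ x} 1/(|e|-1)`.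
open Classical in
noncomputable def muEE (H : Finset (Finset V)) (x : V) : V → ℝ :=
  fun z => (1 / (hdeg H x : ℝ)) *
    ∑ e ∈ H.filter (fun e => x ∈ e ∧ z ∈ e ∧ z ≠ x), 1 / ((e.card : ℝ) - 1)

/-- The equal-edges Ollivier–Ricci curvature of a pair of vertices. -/
noncomputable def kappaEE [Fintype V] (H : Finset (Finset V)) (x y : V) : ℝ :=
  1 - W1 (fun u v => (hdist H u v : ℝ)) (muEE H x) (muEE H y) / (hdist H x y)

/-!
Curvature `1` means `W1(μ_x, μ_y) = 0`. Two distinct points `u ∈ N(x)`, `v ∈ N(y)` of the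
supports are joined through `x ⋯ y`, hence lie at distance at least `1`; so a coupling of cost
`0` moves no mass and `μ_x = μ_y`. The support of `μ_x` is `N(x)`, and at a common neighbour `z`
whose hyperedges with `x` and `y` are unique, say `e` and `e'`, the two measures take the values
`1 / (d_x (|e| - 1))` and `1 / (d_y (|e'| - 1))`; as `d_x = d_y`, this gives `|e| = |e'|`.

Distances are bounded below through the 2-section graph: a shortest walk in it is a hypergraph
path, because vertices two or more steps apart along it are not adjacent, so the hyperedges
chosen for its steps are pairwise distinct.
-/

lemma HNbr.symm {H : Finset (Finset V)} {u v : V} (h : HNbr H u v) : HNbr H v u :=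
  ⟨h.1.symm, h.2.imp fun _ ⟨he, hu, hv⟩ => ⟨he, hv, hu⟩⟩

def twoSection (H : Finset (Finset V)) : SimpleGraph V where
  Adj := HNbr H
  symm := ⟨fun _ _ => HNbr.symm⟩
  loopless := ⟨fun _ h => h.1 rfl⟩

@[simp]
lemma twoSection_adj {H : Finset (Finset V)} {u v : V} : (twoSection H).Adj u v ↔ HNbr H u v :=
  Iff.rfl

namespace SimpleGraph.Walk

variable {G : SimpleGraph V} {u v : V} {p : G.Walk u v}

lemma dist_getVert_of_length_eq_dist (hp : p.length = G.dist u v) {i : ℕ}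
    (hi : i ≤ p.length) : G.dist u (p.getVert i) = i := by
  apply le_antisymm
  · simpa [take_length, hi] using dist_le (p.take i)
  · have hleft := (p.take i).reachable.dist_triangle_left v
    have hright := dist_le (p.drop i)
    rw [drop_length] at hright
    omega

lemma not_adj_getVert_of_length_eq_dist (hp : p.length = G.dist u v) {i j : ℕ}
    (hij : i + 1 < j) (hj : j ≤ p.length) : ¬G.Adj (p.getVert i) (p.getVert j) := fun hadj => by
  have := dist_le ((p.take i).concat hadj)
  rw [length_concat, take_length, dist_getVert_of_length_eq_dist hp hj] at this
  omega

end SimpleGraph.Walk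

lemma hPathLen_of_reachable {H : Finset (Finset V)} {u v : V}
    (h : (twoSection H).Reachable u v) : HPathLen H ((twoSection H).dist u v) u v := by
  obtain ⟨p, hp⟩ := h.exists_walk_length_eq_dist
  have hdist {i : ℕ} (hi : i ≤ p.length) := p.dist_getVert_of_length_eq_dist hp hi
  choose e he using fun i : Fin p.length => (twoSection_adj.mp (p.adj_getVert_succ i.isLt)).2
  have he_ne {i j : Fin p.length} (hij : i < j) : e i ≠ e j := fun heq => by
    have hne : p.getVert i ≠ p.getVert (j + 1) := fun h => by
      have := congrArg ((twoSection H).dist u) h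
      rw [hdist i.isLt.le, hdist j.isLt] at this
      omega
    exact p.not_adj_getVert_of_length_eq_dist hp (by omega) j.isLt
      ⟨hne, e i, (he i).1, (he i).2.1, heq ▸ (he j).2.2⟩
  refine ⟨List.ofFn fun i : Fin (p.length + 1) => p.getVert i, List.ofFn e,
    ⟨by simp, by simp [List.ofFn_succ], ?_, ?_, ?_, ?_, ?_⟩, by simp [hp]⟩
  · rw [List.getLast?_eq_some_getLast (by simp), List.getLast_ofFn]
    simp
  · refine List.nodup_ofFn.mpr fun i j hij => Fin.ext ?_
    have := congrArg ((twoSection H).dist u) hij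
    rwa [hdist (Nat.lt_succ_iff.mp i.isLt), hdist (Nat.lt_succ_iff.mp j.isLt)] at this
  · refine List.nodup_ofFn.mpr fun i j hij => ?_
    rcases lt_trichotomy i j with h | h | h
    · exact absurd hij (he_ne h)
    · exact h
    · exact absurd hij.symm (he_ne h)
  · simp only [List.mem_ofFn]
    rintro _ ⟨i, rfl⟩
    exact (he i).1
  · intro i hi
    simp only [List.length_ofFn] at hi
    rw [List.getD_eq_getElem _ _ (by simp; omega), List.getD_eq_getElem _ _ (by simp; omega),
      List.getD_eq_getElem _ _ (by simpa), List.getElem_ofFn, List.getElem_ofFn, List.getElem_ofFn]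
    exact (he ⟨i, hi⟩).2

lemma HPathLen.reachable {H : Finset (Finset V)} {n : ℕ} {u v : V} (h : HPathLen H n u v) :
    (twoSection H).Reachable u v := by
  obtain ⟨vs, es, ⟨hlen, hhead, hlast, -, -, hesH, hstep⟩, -⟩ := h
  have hprefix : ∀ i ≤ es.length, (twoSection H).Reachable u (vs.getD i u) := by
    intro i
    induction i with
    | zero =>
      intro _
      rw [List.getD_eq_getElem?_getD, ← List.head?_eq_getElem?, hhead]
      rfl
    | succ i ih =>
      intro hi
      refine (ih (by omega)).trans ?_
      by_cases heq : vs.getD i u = vs.getD (i + 1) u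
      · rw [heq]
      · have hmem : es.getD i ∅ ∈ H := by
          rw [List.getD_eq_getElem _ _ hi]
          exact hesH _ (List.getElem_mem _)
        exact SimpleGraph.Adj.reachable ⟨heq, _, hmem, hstep i hi⟩
  have hend : vs.getD es.length u = v := by
    rw [List.getD_eq_getElem?_getD, ← Nat.add_sub_cancel es.length 1, ← hlen,
      ← List.getLast?_eq_getElem?, hlast]
    rfl
  exact hend ▸ hprefix _ le_rfl

lemma eq_of_hPathLen_zero {H : Finset (Finset V)} {u v : V} (h : HPathLen H 0 u v) : u = v := by
  obtain ⟨vs, es, ⟨hlen, hhead, hlast, -⟩, hes⟩ := h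
  obtain ⟨a, rfl⟩ := List.length_eq_one_iff.mp (hes ▸ hlen)
  simp_all

lemma one_le_hdist {H : Finset (Finset V)} {n : ℕ} {u v : V} (huv : u ≠ v)
    (h : HPathLen H n u v) : 1 ≤ hdist H u v := by
  rw [Nat.one_le_iff_ne_zero]
  intro h0
  have hmem : HPathLen H (hdist H u v) u v :=
    Nat.sInf_mem (s := {m | HPathLen H m u v}) ⟨n, h⟩
  exact huv (eq_of_hPathLen_zero (h0 ▸ hmem))

section Coupling

variable [Fintype V] {μ ν : V → ℝ} {ξ : V → V → ℝ}

lemma IsCoupling.le_left (h : IsCoupling μ ν ξ) (u v : V) : ξ u v ≤ μ u :=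
  h.2.1 u ▸ single_le_sum (fun w _ => h.1 u w) (mem_univ v)

lemma IsCoupling.le_right (h : IsCoupling μ ν ξ) (u v : V) : ξ u v ≤ ν v :=
  h.2.2 v ▸ single_le_sum (fun w _ => h.1 w v) (mem_univ u)

lemma IsCoupling.swap (h : IsCoupling μ ν ξ) : IsCoupling ν μ (fun v u => ξ u v) :=
  ⟨fun v u => h.1 u v, h.2.2, h.2.1⟩

lemma isCoupling_mul (hμ : ∀ u, 0 ≤ μ u) (hν : ∀ v, 0 ≤ ν v) (hμ1 : ∑ u, μ u = 1)
    (hν1 : ∑ v, ν v = 1) : IsCoupling μ ν (fun u v => μ u * ν v) :=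
  ⟨fun u v => mul_nonneg (hμ u) (hν v), fun u => by rw [← mul_sum, hν1, mul_one],
    fun v => by rw [← sum_mul, hμ1, one_mul]⟩

lemma IsCoupling.sub_le_cost {d : V → V → ℝ} (h : IsCoupling μ ν ξ) (hd0 : ∀ u v, 0 ≤ d u v)
    (hd1 : ∀ u v, u ≠ v → 0 < μ u → 0 < ν v → 1 ≤ d u v) (z : V) :
    μ z - ν z ≤ ∑ u, ∑ v, d u v * ξ u v := by
  classical
  have hmove (v : V) (hv : v ∈ univ.erase z) : ξ z v ≤ d z v * ξ z v := by
    rcases (h.1 z v).eq_or_lt with h0 | hpos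
    · rw [← h0, mul_zero]
    · exact le_mul_of_one_le_left (h.1 z v) (hd1 z v (ne_of_mem_erase hv).symm
        (hpos.trans_le (h.le_left z v)) (hpos.trans_le (h.le_right z v)))
  calc μ z - ν z ≤ μ z - ξ z z := by linarith [h.le_right z z]
    _ = ∑ v ∈ univ.erase z, ξ z v := by rw [sum_erase_eq_sub (mem_univ z), h.2.1 z]
    _ ≤ ∑ v ∈ univ.erase z, d z v * ξ z v := sum_le_sum hmove
    _ ≤ ∑ v, d z v * ξ z v :=
      sum_le_sum_of_subset_of_nonneg (subset_univ _) fun v _ _ =>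
        mul_nonneg (hd0 z v) (h.1 z v)
    _ ≤ ∑ u, ∑ v, d u v * ξ u v :=
      single_le_sum (f := fun u => ∑ v, d u v * ξ u v)
        (fun u _ => sum_nonneg fun v _ => mul_nonneg (hd0 u v) (h.1 u v)) (mem_univ z)

lemma abs_sub_le_W1 {d : V → V → ℝ} (hμ : ∀ u, 0 ≤ μ u) (hν : ∀ v, 0 ≤ ν v)
    (hμ1 : ∑ u, μ u = 1) (hν1 : ∑ v, ν v = 1) (hd0 : ∀ u v, 0 ≤ d u v)
    (hd1 : ∀ u v, u ≠ v → 0 < μ u → 0 < ν v → 1 ≤ d u v) (z : V) :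
    |μ z - ν z| ≤ W1 d μ ν := by
  refine le_csInf ⟨_, _, isCoupling_mul hμ hν hμ1 hν1, rfl⟩ ?_
  rintro _ ⟨ξ, hξ, rfl⟩
  refine abs_sub_le_iff.mpr ⟨hξ.sub_le_cost hd0 hd1 z, ?_⟩
  have := hξ.swap.sub_le_cost (d := fun v u => d u v) (fun v u => hd0 u v)
    (fun v u hvu hv hu => hd1 u v hvu.symm hu hv) z
  rwa [sum_comm] at this

lemma eq_of_W1_eq_zero {d : V → V → ℝ} (hμ : ∀ u, 0 ≤ μ u) (hν : ∀ v, 0 ≤ ν v)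
    (hμ1 : ∑ u, μ u = 1) (hν1 : ∑ v, ν v = 1) (hd0 : ∀ u v, 0 ≤ d u v)
    (hd1 : ∀ u v, u ≠ v → 0 < μ u → 0 < ν v → 1 ≤ d u v) (hW : W1 d μ ν = 0) : μ = ν :=
  funext fun z => sub_eq_zero.mp <| abs_nonpos_iff.mp <|
    hW ▸ abs_sub_le_W1 hμ hν hμ1 hν1 hd0 hd1 z

end Coupling

lemma one_div_card_sub_one_pos {e : Finset V} (he : 2 ≤ e.card) :
    0 < 1 / ((e.card : ℝ) - 1) := by
  have : (2 : ℝ) ≤ e.card := by exact_mod_cast he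
  exact one_div_pos.mpr (by linarith)

section EqualEdges

variable {H : Finset (Finset V)} {x : V}

lemma muEE_nonneg (hl : ∀ e ∈ H, 2 ≤ e.card) (z : V) : 0 ≤ muEE H x z := by
  classical
  exact mul_nonneg (by positivity) <| sum_nonneg fun e he =>
    (one_div_card_sub_one_pos (hl e (mem_filter.mp he).1)).le

lemma muEE_pos_iff (hl : ∀ e ∈ H, 2 ≤ e.card) (hx : 0 < hdeg H x) (z : V) :
    0 < muEE H x z ↔ HNbr H x z := by
  classical
  rw [muEE, mul_pos_iff_of_pos_left (by positivity), sum_pos_iff_of_nonneg fun e he =>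
    (one_div_card_sub_one_pos (hl e (mem_filter.mp he).1)).le]
  constructor
  · rintro ⟨e, he, -⟩
    obtain ⟨heH, hxe, hze, hzx⟩ := mem_filter.mp he
    exact ⟨hzx.symm, e, heH, hxe, hze⟩
  · rintro ⟨hxz, e, heH, hxe, hze⟩
    exact ⟨e, mem_filter.mpr ⟨heH, hxe, hze, hxz.symm⟩, one_div_card_sub_one_pos (hl e heH)⟩

lemma sum_muEE [Fintype V] (hl : ∀ e ∈ H, 2 ≤ e.card) (hx : 0 < hdeg H x) :
    ∑ z, muEE H x z = 1 := by
  classical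
  have hedge (e : Finset V) (he : e ∈ H) :
      ∑ z, (if x ∈ e ∧ z ∈ e ∧ z ≠ x then 1 / ((e.card : ℝ) - 1) else 0) =
        if x ∈ e then 1 else 0 := by
    split_ifs with hxe
    · have h2 : (2 : ℝ) ≤ e.card := by exact_mod_cast hl e he
      have hfilter : univ.filter (fun z => x ∈ e ∧ z ∈ e ∧ z ≠ x) = e.erase x := by
        ext z
        simp [hxe, and_comm]
      rw [← sum_filter, hfilter, sum_const, card_erase_of_mem hxe, nsmul_eq_mul,
        Nat.cast_sub (one_le_two.trans (hl e he)), Nat.cast_one,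
        mul_one_div_cancel (by linarith)]
    · simp [hxe]
  simp only [muEE, ← mul_sum, sum_filter]
  rw [sum_comm, sum_congr rfl hedge, sum_boole]
  exact one_div_mul_cancel (Nat.cast_ne_zero.mpr hx.ne')

lemma muEE_eq_of_existsUnique {z : V} {e : Finset V} (hu : ∃! e, e ∈ H ∧ x ∈ e ∧ z ∈ e)
    (he : e ∈ H) (hxe : x ∈ e) (hze : z ∈ e) (hzx : z ≠ x) :
    muEE H x z = 1 / (hdeg H x : ℝ) * (1 / ((e.card : ℝ) - 1)) := by
  classical
  have hfilter : H.filter (fun e => x ∈ e ∧ z ∈ e ∧ z ≠ x) = {e} := by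
    ext e'
    simp only [mem_filter, mem_singleton]
    exact ⟨fun ⟨he', hxe', hze', _⟩ => hu.unique ⟨he', hxe', hze'⟩ ⟨he, hxe, hze⟩,
      fun h => h ▸ ⟨he, hxe, hze, hzx⟩⟩
  rw [muEE, hfilter, sum_singleton]

end EqualEdges

section Curvature

variable [Fintype V] {H : Finset (Finset V)} {x y : V} {n : ℕ}

lemma W1_eq_zero_of_kappaEE_eq_one (hxy : x ≠ y) (hn : HPathLen H n x y)
    (hc : kappaEE H x y = 1) :
    W1 (fun u v => (hdist H u v : ℝ)) (muEE H x) (muEE H y) = 0 := by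
  have hd : (hdist H x y : ℝ) ≠ 0 := by
    exact_mod_cast Nat.one_le_iff_ne_zero.mp (one_le_hdist hxy hn)
  rw [kappaEE, sub_eq_self, div_eq_zero_iff] at hc
  exact hc.resolve_right hd

lemma muEE_eq_of_kappaEE_eq_one (hl : ∀ e ∈ H, 2 ≤ e.card) (hx : 0 < hdeg H x)
    (hy : 0 < hdeg H y) (hxy : x ≠ y) (hn : HPathLen H n x y) (hc : kappaEE H x y = 1) :
    muEE H x = muEE H y := by
  refine eq_of_W1_eq_zero (muEE_nonneg hl) (muEE_nonneg hl) (sum_muEE hl hx)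
    (sum_muEE hl hy) (fun _ _ => Nat.cast_nonneg _) ?_
    (W1_eq_zero_of_kappaEE_eq_one hxy hn hc)
  intro u v huv hu hv
  have hux : (twoSection H).Adj u x := ((muEE_pos_iff hl hx u).mp hu).symm
  have hyv : (twoSection H).Adj y v := (muEE_pos_iff hl hy v).mp hv
  have hreach : (twoSection H).Reachable u v :=
    hux.reachable.trans (hn.reachable.trans hyv.reachable)
  exact_mod_cast one_le_hdist huv (hPathLen_of_reachable hreach)

end Curvature

theorem stmt13 [Fintype V] (H : Finset (Finset V))
    (hloopless : ∀ e ∈ H, 2 ≤ e.card)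
    (x y : V) (hxy : x ≠ y)
    (hcomp : ∃ n, HPathLen H n x y)
    (ha : ∀ z, HNbr H x z → HNbr H y z →
      (∃! e, e ∈ H ∧ x ∈ e ∧ z ∈ e) ∧ (∃! e, e ∈ H ∧ y ∈ e ∧ z ∈ e))
    (hb : hdeg H x = hdeg H y) (hb' : 0 < hdeg H x)
    (hc : kappaEE H x y = 1) :
    (∀ z, HNbr H x z ↔ HNbr H y z) ∧
    (∀ z, HNbr H x z → HNbr H y z →
      ∀ e e' : Finset V, e ∈ H → x ∈ e → z ∈ e → e' ∈ H → y ∈ e' → z ∈ e' →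
        e.card = e'.card) := by
  obtain ⟨n, hn⟩ := hcomp
  have hy : 0 < hdeg H y := hb ▸ hb'
  have hμ := muEE_eq_of_kappaEE_eq_one hloopless hb' hy hxy hn hc
  refine ⟨fun z => by rw [← muEE_pos_iff hloopless hb', ← muEE_pos_iff hloopless hy, hμ], ?_⟩
  intro z hxz hyz e e' he hxe hze he' hye' hze'
  have hz := congrFun hμ z
  rw [muEE_eq_of_existsUnique (ha z hxz hyz).1 he hxe hze hxz.1.symm,
    muEE_eq_of_existsUnique (ha z hxz hyz).2 he' hye' hze' hyz.1.symm, hb,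
    mul_right_inj' (by positivity), one_div, one_div, inv_inj, sub_left_inj] at hz
  exact_mod_cast hz
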